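/- arXiv:1110.1352 — 7 statements merged into one kernel-verified Lean document; each statement's English description precedes it below -/
import Mathlib

section
/- Let P ⊂ int(C) ∪ {0} with P a closed pointed convex cone and C a closed convex cone, and let α = α(C,P) = inf{‖x-y‖ : x ∈ P, ‖x‖=1, y ∉ int C} > 0. If y ∉ int(C) and x ∈ (y + P) ∩ (int C)^c, then ‖x‖ ≤ (1 + 1/α)‖y‖. -/
open Filter Topology Pointwise

/-- Contingent cone to `S` at `z`. -/
def contingentCone {E : Type*} [NormedAddCommGroup E] [NormedSpace ℝ E]
    (S : Set E) (z : E) : Set E :=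
  {v | ∃ h : ℕ → ℝ, ∃ vk : ℕ → E, (∀ k, 0 < h k) ∧ Tendsto h atTop (𝓝 0) ∧
    Tendsto vk atTop (𝓝 v) ∧ ∀ k, z + h k • vk k ∈ S}

/-- Recession cone of `S`. -/
def recessionCone {E : Type*} [NormedAddCommGroup E] [NormedSpace ℝ E]
    (S : Set E) : Set E :=
  {y | ∃ h : ℕ → ℝ, ∃ yk : ℕ → E, (∀ k, 0 < h k) ∧ Tendsto h atTop (𝓝 0) ∧
    (∀ k, yk k ∈ S) ∧ Tendsto (fun k => h k • yk k) atTop (𝓝 y)}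

/-- Set of minimal elements of `S` with respect to the ordering cone `P`. -/
def minimalSet {E : Type*} [NormedAddCommGroup E] [NormedSpace ℝ E]
    (S P : Set E) : Set E :=
  {y | y ∈ S ∧ ((fun d => y - d) '' P) ∩ S = {y}}

/-- Contingent derivative of a set-valued map `F` at `(x, y)` in direction `v`. -/
def contDeriv {X E : Type*} [NormedAddCommGroup X] [NormedSpace ℝ X]
    [NormedAddCommGroup E] [NormedSpace ℝ E]
    (F : X → Set E) (x : X) (y : E) (v : X) : Set E :=
  {w | ∃ h : ℕ → ℝ, ∃ vk : ℕ → X, ∃ wk : ℕ → E, (∀ k, 0 < h k) ∧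
    Tendsto h atTop (𝓝 0) ∧ Tendsto vk atTop (𝓝 v) ∧ Tendsto wk atTop (𝓝 w) ∧
    ∀ k, y + h k • wk k ∈ F (x + h k • vk k)}

/-- `F` is Lipschitz (with constant `l`) on a neighborhood of `x`. -/
def LipschitzAround {X E : Type*} [NormedAddCommGroup X] [NormedSpace ℝ X]
    [NormedAddCommGroup E] [NormedSpace ℝ E]
    (F : X → Set E) (x : X) (l : ℝ) : Prop :=
  ∃ O ∈ 𝓝 x, ∀ x1 ∈ O, ∀ x2 ∈ O,
    F x1 ⊆ F x2 + Metric.closedBall (0 : E) (l * ‖x1 - x2‖)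

theorem smul_mem_interior_of_cone {E : Type*} [AddCommGroup E] [Module ℝ E]
    [TopologicalSpace E] [ContinuousConstSMul ℝ E] {C : Set E}
    (hC : ∀ (c : ℝ), 0 ≤ c → ∀ x ∈ C, c • x ∈ C) {t : ℝ} (ht : 0 < t) {x : E}
    (hx : x ∈ interior C) : t • x ∈ interior C := by
  have hsub : t • C ⊆ C := by
    rintro _ ⟨c, hc, rfl⟩
    exact hC t ht.le c hc
  have htx : t • x ∈ interior (t • C) := by
    rw [interior_smul₀ ht.ne']
    exact Set.smul_mem_smul_set hx
  exact interior_mono hsub htx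

theorem norm_le_div_of_add_notMem_interior {E : Type*} [NormedAddCommGroup E]
    [NormedSpace ℝ E] {P C : Set E} (hPcone : ∀ (c : ℝ), 0 ≤ c → ∀ x ∈ P, c • x ∈ P)
    (hCcone : ∀ (c : ℝ), 0 ≤ c → ∀ x ∈ C, c • x ∈ C) {α : ℝ} (hα : 0 < α)
    (hαlb : ∀ z ∈ P, ‖z‖ = 1 → ∀ w ∉ interior C, α ≤ ‖z - w‖)
    {y d : E} (hd : d ∈ P) (hyd : y + d ∉ interior C) : ‖d‖ ≤ ‖y‖ / α := by
  rcases eq_or_ne d 0 with rfl | hd0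
  · simp only [norm_zero]; positivity
  have ht : 0 < ‖d‖ := norm_pos_iff.mpr hd0
  -- The unit vector `‖d‖⁻¹ • d ∈ P` is at distance `‖y‖ / ‖d‖` from `‖d‖⁻¹ • (y + d) ∉ int C`.
  have hz : ‖d‖⁻¹ • d ∈ P := hPcone _ (inv_nonneg.mpr ht.le) d hd
  have hzn : ‖‖d‖⁻¹ • d‖ = 1 := norm_smul_inv_norm hd0
  have hw : ‖d‖⁻¹ • (y + d) ∉ interior C := fun hw => hyd <| by
    simpa [smul_inv_smul₀ ht.ne'] using smul_mem_interior_of_cone hCcone ht hw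
  have key : α ≤ ‖y‖ / ‖d‖ := by
    have h := hαlb _ hz hzn _ hw
    rwa [← smul_sub, sub_add_cancel_right, norm_smul, norm_neg, norm_inv, norm_norm,
      inv_mul_eq_div] at h
  rw [le_div_iff₀ ht] at key
  rw [le_div_iff₀ hα, mul_comm]
  exact key

theorem stmt5_general {p : ℕ} (P C : Set (EuclideanSpace ℝ (Fin p)))
    (hPcone : ∀ (c : ℝ), 0 ≤ c → ∀ x ∈ P, c • x ∈ P)
    (hCcone : ∀ (c : ℝ), 0 ≤ c → ∀ x ∈ C, c • x ∈ C)
    (α : ℝ) (hα : 0 < α)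
    (hαlb : ∀ z ∈ P, ‖z‖ = 1 → ∀ w ∉ interior C, α ≤ ‖z - w‖)
    (y x : EuclideanSpace ℝ (Fin p))
    (hxP : ∃ d ∈ P, x = y + d) (hxC : x ∉ interior C) :
    ‖x‖ ≤ (1 + 1 / α) * ‖y‖ := by
  obtain ⟨d, hd, rfl⟩ := hxP
  have hd_le := norm_le_div_of_add_notMem_interior hPcone hCcone hα hαlb hd hxC
  calc ‖y + d‖ ≤ ‖y‖ + ‖d‖ := norm_add_le y d
    _ ≤ ‖y‖ + ‖y‖ / α := by gcongr
    _ = (1 + 1 / α) * ‖y‖ := by ring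

theorem stmt5 {p : ℕ} (P C : Set (EuclideanSpace ℝ (Fin p)))
    (hPconv : Convex ℝ P) (hPcone : ∀ (c : ℝ), 0 ≤ c → ∀ x ∈ P, c • x ∈ P)
    (hPclosed : IsClosed P) (hP0 : (0 : EuclideanSpace ℝ (Fin p)) ∈ P)
    (hPpointed : P ∩ (-P) = {0})
    (hCconv : Convex ℝ C) (hCcone : ∀ (c : ℝ), 0 ≤ c → ∀ x ∈ C, c • x ∈ C)
    (hCclosed : IsClosed C) (hC0 : (0 : EuclideanSpace ℝ (Fin p)) ∈ C)
    (hPC : P ⊆ interior C ∪ {0})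
    (α : ℝ) (hα : 0 < α)
    (hαlb : ∀ z ∈ P, ‖z‖ = 1 → ∀ w ∉ interior C, α ≤ ‖z - w‖)
    (y x : EuclideanSpace ℝ (Fin p))
    (hy : y ∉ interior C) (hxP : ∃ d ∈ P, x = y + d) (hxC : x ∉ interior C) :
    ‖x‖ ≤ (1 + 1 / α) * ‖y‖ :=
  stmt5_general P C hPcone hCcone α hα hαlb y x hxP hxC
end

section
/- Every nonempty compact subset K of R^p is externally stable with respect to a pointed closed convex cone P containing the origin: K ⊂ E(K,P) + P, where E(K,P) is the set of minimal elements of K. -/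
/-!
The relation `u ≼ v :↔ v - u ∈ P` is a preorder (`P` is a convex cone containing `0`) whose lower
sets are closed. In a compact set every chain then has a lower bound, by the finite intersection
property, so Zorn's lemma yields a `≼`-minimal `w ∈ K` below any `z ∈ K`; pointedness of `P`
upgrades this to `w ∈ E(K, P)`, and `z = w + (z - w)`.
-/

open Filter Topology Pointwise

section Compact

variable {X : Type*} [TopologicalSpace X] {r : X → X → Prop} [IsPreorder X r] {K : Set X}

theorem IsCompact.exists_lowerBound_of_isChain (hK : IsCompact K)
    (hr : ∀ y, IsClosed {x | r x y}) {c : Set X} (hcK : c ⊆ K) (hc : IsChain r c)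
    (hne : c.Nonempty) : ∃ w ∈ K, ∀ y ∈ c, r w y := by
  have : Nonempty c := hne.to_subtype
  have hdir : Directed (· ⊇ ·) fun y : c => {x | r x y} := by
    rintro ⟨a, ha⟩ ⟨b, hb⟩
    rcases hc.total ha hb with hab | hba
    · exact ⟨⟨a, ha⟩, le_rfl, fun x hxa => _root_.trans hxa hab⟩
    · exact ⟨⟨b, hb⟩, fun x hxb => _root_.trans hxb hba, le_rfl⟩
  by_contra! hnone
  obtain ⟨⟨y, hy⟩, hKy⟩ := hK.elim_directed_family_closed
    (fun y : c => {x | r x y}) (fun y => hr y) (by ext x; simpa using hnone x) hdir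
  exact hKy.subset ⟨hcK hy, refl y⟩

theorem IsCompact.exists_rel_minimal (hK : IsCompact K) (hr : ∀ y, IsClosed {x | r x y})
    {z : X} (hz : z ∈ K) : ∃ w ∈ K, r w z ∧ ∀ u ∈ K, r u w → r w u := by
  let T := {y // y ∈ K ∧ r y z}
  have : Nonempty T := ⟨⟨z, hz, refl z⟩⟩
  have hbound : ∀ c : Set T, IsChain (fun a b : T => r b a) c → c.Nonempty →
      ∃ l : T, ∀ a ∈ c, r l a := by
    rintro c hc ⟨y, hy⟩
    obtain ⟨l, hlK, hl⟩ := hK.exists_lowerBound_of_isChain hr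
      (by rintro _ ⟨a, -, rfl⟩; exact a.2.1)
      (hc.symm.image_of_map_rel _ _ Subtype.val fun _ _ h => h) ⟨y, y, hy, rfl⟩
    exact ⟨⟨l, hlK, _root_.trans (hl y ⟨y, hy, rfl⟩) y.2.2⟩, fun a ha => hl a ⟨a, ha, rfl⟩⟩
  obtain ⟨⟨w, hwK, hwz⟩, hw⟩ :=
    exists_maximal_of_nonempty_chains_bounded hbound fun hab hbc => _root_.trans hbc hab
  exact ⟨w, hwK, hwz, fun u huK huw => hw ⟨u, huK, _root_.trans huw hwz⟩ huw⟩

end Compact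

section Cone

variable {E : Type*}

theorem Convex.add_mem_of_smul_mem [AddCommGroup E] [Module ℝ E] {P : Set E}
    (hconv : Convex ℝ P) (hcone : ∀ (c : ℝ), 0 ≤ c → ∀ x ∈ P, c • x ∈ P) {x y : E}
    (hx : x ∈ P) (hy : y ∈ P) : x + y ∈ P := by
  have hmid : (1 / 2 : ℝ) • x + (1 / 2 : ℝ) • y ∈ P := hconv hx hy (by norm_num) (by norm_num)
    (by norm_num)
  convert hcone 2 zero_le_two _ hmid using 1
  module

theorem isPreorder_sub_mem [AddCommGroup E] {P : Set E} (hP0 : 0 ∈ P)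
    (hadd : ∀ x ∈ P, ∀ y ∈ P, x + y ∈ P) : IsPreorder E fun u v => v - u ∈ P where
  refl u := by simpa using hP0
  trans u v w huv hvw := by simpa using hadd _ hvw _ huv

theorem mem_minimalSet_of_forall_sub_mem [NormedAddCommGroup E] [NormedSpace ℝ E]
    {S P : Set E} (hP0 : 0 ∈ P) (hPpointed : P ∩ -P = {0}) {w : E} (hw : w ∈ S)
    (hmin : ∀ u ∈ S, w - u ∈ P → u - w ∈ P) : w ∈ minimalSet S P := by
  refine ⟨hw, subset_antisymm ?_ fun u hu => ⟨⟨0, hP0, by simpa using hu.symm⟩, hu ▸ hw⟩⟩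
  rintro _ ⟨⟨d, hd, rfl⟩, hdS⟩
  have hnd : -d ∈ P := by simpa using hmin _ hdS (by simpa using hd)
  have hd0 : d = 0 := by simpa using hPpointed.subset ⟨hd, hnd⟩
  simp [hd0]

end Cone

theorem stmt6_general {p : ℕ} (P K : Set (EuclideanSpace ℝ (Fin p)))
    (hPconv : Convex ℝ P) (hPcone : ∀ (c : ℝ), 0 ≤ c → ∀ x ∈ P, c • x ∈ P)
    (hPclosed : IsClosed P) (hP0 : (0 : EuclideanSpace ℝ (Fin p)) ∈ P)
    (hPpointed : P ∩ (-P) = {0})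
    (hK : IsCompact K) :
    K ⊆ minimalSet K P + P := by
  intro z hz
  have := isPreorder_sub_mem hP0 fun x hx y hy => hPconv.add_mem_of_smul_mem hPcone hx hy
  obtain ⟨w, hwK, hwz, hw⟩ := hK.exists_rel_minimal (r := fun u v => v - u ∈ P)
    (fun v => hPclosed.preimage (by fun_prop)) hz
  exact ⟨w, mem_minimalSet_of_forall_sub_mem hP0 hPpointed hwK hw, z - w, hwz, add_sub_cancel w z⟩

theorem stmt6 {p : ℕ} (P K : Set (EuclideanSpace ℝ (Fin p)))
    (hPconv : Convex ℝ P) (hPcone : ∀ (c : ℝ), 0 ≤ c → ∀ x ∈ P, c • x ∈ P)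
    (hPclosed : IsClosed P) (hP0 : (0 : EuclideanSpace ℝ (Fin p)) ∈ P)
    (hPpointed : P ∩ (-P) = {0})
    (hKne : K.Nonempty) (hK : IsCompact K) :
    K ⊆ minimalSet K P + P :=
  stmt6_general P K hPconv hPcone hPclosed hP0 hPpointed hK
end

section
/- Let P be a pointed convex cone in R^p containing the origin, and let K1, K2 be nonempty compact subsets of R^p with K1 ⊂ K2 and K2 ⊂ K1 + P. Then the minimal element sets coincide: E(K1,P) = E(K2,P). -/
open Filter Topology Pointwise

/-!
A point of `K₂ ⊆ K₁ + P` lies above some point of `K₁`, so a minimal point of `K₂` must itself lie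
in `K₁`, where it stays minimal. Conversely, if `y` is minimal in `K₁` and `z ≤ y` in `K₂`, write
`z = x + r` with `x ∈ K₁`, `r ∈ P`; then `x ≤ y` forces `x = y` because `P + P ⊆ P`, so `y - z = -r`
lies in `P ∩ -P = {0}`.
-/

theorem Convex.add_mem_of_smul_mem_s7 {E : Type*} [AddCommGroup E] [Module ℝ E] {P : Set E}
    (hPconv : Convex ℝ P) (hPcone : ∀ c : ℝ, 0 ≤ c → ∀ x ∈ P, c • x ∈ P)
    {a b : E} (ha : a ∈ P) (hb : b ∈ P) : a + b ∈ P := by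
  have hmid := hPconv ha hb (by norm_num : (0 : ℝ) ≤ 1 / 2) (by norm_num : (0 : ℝ) ≤ 1 / 2)
    (by norm_num)
  convert hPcone 2 (by norm_num) _ hmid using 1
  rw [smul_add, smul_smul, smul_smul]
  norm_num

section minimalSet

variable {E : Type*} [NormedAddCommGroup E] [NormedSpace ℝ E] {S K₁ K₂ P : Set E} {y : E}

theorem mem_minimalSet_iff (hP0 : 0 ∈ P) :
    y ∈ minimalSet S P ↔ y ∈ S ∧ ∀ z ∈ S, y - z ∈ P → z = y := by
  refine and_congr_right fun hyS => ⟨fun hmin z hzS hyz => ?_, fun hmin => ?_⟩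
  · have hz : z ∈ (fun d => y - d) '' P ∩ S := ⟨⟨y - z, hyz, sub_sub_cancel y z⟩, hzS⟩
    rwa [hmin] at hz
  · refine Set.eq_singleton_iff_unique_mem.2 ⟨⟨⟨0, hP0, sub_zero y⟩, hyS⟩, ?_⟩
    rintro z ⟨⟨d, hd, rfl⟩, hzS⟩
    exact hmin _ hzS (by rwa [sub_sub_cancel])

theorem minimalSet_subset_of_subset_add (hP0 : 0 ∈ P) (h12 : K₁ ⊆ K₂) (h21 : K₂ ⊆ K₁ + P) :
    minimalSet K₂ P ⊆ minimalSet K₁ P := by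
  intro y hy
  rw [mem_minimalSet_iff hP0] at hy ⊢
  obtain ⟨hyK₂, hmin⟩ := hy
  have hyK₁ : y ∈ K₁ := by
    obtain ⟨x, hx, q, hq, rfl⟩ := Set.mem_add.1 (h21 hyK₂)
    exact hmin x (h12 hx) (by rwa [add_sub_cancel_left]) ▸ hx
  exact ⟨hyK₁, fun z hz => hmin z (h12 hz)⟩

theorem minimalSet_subset_of_subset_add_of_pointed (hPconv : Convex ℝ P)
    (hPcone : ∀ c : ℝ, 0 ≤ c → ∀ x ∈ P, c • x ∈ P) (hP0 : 0 ∈ P) (hPpointed : P ∩ -P = {0})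
    (h12 : K₁ ⊆ K₂) (h21 : K₂ ⊆ K₁ + P) :
    minimalSet K₁ P ⊆ minimalSet K₂ P := by
  intro y hy
  rw [mem_minimalSet_iff hP0] at hy ⊢
  obtain ⟨hyK₁, hmin⟩ := hy
  refine ⟨h12 hyK₁, fun z hzK₂ hyz => ?_⟩
  obtain ⟨x, hxK₁, r, hr, rfl⟩ := Set.mem_add.1 (h21 hzK₂)
  have hxy : x = y := hmin x hxK₁ <| by
    simpa [sub_add_eq_sub_sub] using hPconv.add_mem_of_smul_mem_s7 hPcone hyz hr
  subst hxy
  have hr0 : r ∈ P ∩ -P := ⟨hr, by simpa using hyz⟩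
  rw [hPpointed] at hr0
  simpa using hr0

end minimalSet

theorem stmt7_general {p : ℕ} (P K1 K2 : Set (EuclideanSpace ℝ (Fin p)))
    (hPconv : Convex ℝ P) (hPcone : ∀ (c : ℝ), 0 ≤ c → ∀ x ∈ P, c • x ∈ P)
    (hP0 : (0 : EuclideanSpace ℝ (Fin p)) ∈ P)
    (hPpointed : P ∩ (-P) = {0})
    (h12 : K1 ⊆ K2) (h21 : K2 ⊆ K1 + P) :
    minimalSet K1 P = minimalSet K2 P :=
  (minimalSet_subset_of_subset_add_of_pointed hPconv hPcone hP0 hPpointed h12 h21).antisymm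
    (minimalSet_subset_of_subset_add hP0 h12 h21)

theorem stmt7 {p : ℕ} (P K1 K2 : Set (EuclideanSpace ℝ (Fin p)))
    (hPconv : Convex ℝ P) (hPcone : ∀ (c : ℝ), 0 ≤ c → ∀ x ∈ P, c • x ∈ P)
    (hP0 : (0 : EuclideanSpace ℝ (Fin p)) ∈ P)
    (hPpointed : P ∩ (-P) = {0})
    (hK1ne : K1.Nonempty) (hK1 : IsCompact K1)
    (hK2ne : K2.Nonempty) (hK2 : IsCompact K2)
    (h12 : K1 ⊆ K2) (h21 : K2 ⊆ K1 + P) :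
    minimalSet K1 P = minimalSet K2 P :=
  stmt7_general P K1 K2 hPconv hPcone hP0 hPpointed h12 h21
end

section
/- Let S1, S2 be nonempty subsets of R^p, l ≥ 0, and suppose S1 ⊂ S2 + lB̄ where B̄ is the closed unit ball. If S2 is P-bounded (S2^+ ∩ (-P) = {0}), then the closure of S1 is P-bounded. -/
open Filter Topology Pointwise

/-!
A recession cone does not grow when the set is perturbed by a bounded set: if `h k → 0⁺` and
`h k • (s k + b k) → y` with `b k` bounded, then `h k • b k → 0`, so `h k • s k → y` as well.
Both the passage to the closure (`closure S ⊆ S + ball 0 1`) and the inclusion `S1 ⊆ S2 + l B̄` are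
such perturbations, hence `(cl S1)⁺ ⊆ S2⁺`.
-/

section RecessionCone

variable {E : Type*} [NormedAddCommGroup E] [NormedSpace ℝ E]

theorem recessionCone_mono {S T : Set E} (hST : S ⊆ T) : recessionCone S ⊆ recessionCone T :=
  fun _ ⟨h, yk, hpos, h0, hmem, hlim⟩ => ⟨h, yk, hpos, h0, fun k => hST (hmem k), hlim⟩

theorem zero_mem_recessionCone {S : Set E} (hS : S.Nonempty) : (0 : E) ∈ recessionCone S := by
  obtain ⟨s, hs⟩ := hS
  refine ⟨fun k => 1 / (k + 1), fun _ => s, fun k => by positivity,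
    tendsto_one_div_add_atTop_nhds_zero_nat, fun _ => hs, ?_⟩
  simpa using (tendsto_one_div_add_atTop_nhds_zero_nat (𝕜 := ℝ)).smul_const s

theorem recessionCone_add_subset_of_isBounded {S B : Set E} (hB : Bornology.IsBounded B) :
    recessionCone (S + B) ⊆ recessionCone S := by
  rintro y ⟨h, yk, hpos, h0, hmem, hlim⟩
  choose sk hsk bk hbk hsum using hmem
  obtain ⟨C, hC⟩ := hB.exists_norm_le
  have hb : Tendsto (fun k => h k • bk k) atTop (𝓝 0) :=
    h0.zero_smul_isBoundedUnder_le (isBoundedUnder_of ⟨C, fun k => hC _ (hbk k)⟩)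
  refine ⟨h, sk, hpos, h0, hsk, ?_⟩
  simpa [← hsum, smul_add] using hlim.sub hb

theorem recessionCone_closure (S : Set E) : recessionCone (closure S) = recessionCone S := by
  refine subset_antisymm ?_ (recessionCone_mono subset_closure)
  calc recessionCone (closure S)
      ⊆ recessionCone (S + Metric.ball 0 1) := by
        rw [add_ball_zero]
        exact recessionCone_mono (Metric.closure_subset_thickening one_pos S)
    _ ⊆ recessionCone S := recessionCone_add_subset_of_isBounded Metric.isBounded_ball

end RecessionCone

theorem stmt8_general {p : ℕ} (P S1 S2 : Set (EuclideanSpace ℝ (Fin p)))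
    (hP0 : (0 : EuclideanSpace ℝ (Fin p)) ∈ P)
    (hS1ne : S1.Nonempty)
    (l : ℝ)
    (hsub : S1 ⊆ S2 + Metric.closedBall (0 : EuclideanSpace ℝ (Fin p)) l)
    (hS2bdd : recessionCone S2 ∩ (-P) = {0}) :
    recessionCone (closure S1) ∩ (-P) = {0} := by
  have hrec : recessionCone (closure S1) ⊆ recessionCone S2 := by
    rw [recessionCone_closure]
    exact (recessionCone_mono hsub).trans
      (recessionCone_add_subset_of_isBounded Metric.isBounded_closedBall)
  refine subset_antisymm (hS2bdd ▸ Set.inter_subset_inter_left _ hrec) ?_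
  rw [Set.singleton_subset_iff]
  exact ⟨zero_mem_recessionCone (hS1ne.mono subset_closure), by simpa using hP0⟩

theorem stmt8 {p : ℕ} (P S1 S2 : Set (EuclideanSpace ℝ (Fin p)))
    (hPcone : ∀ (c : ℝ), 0 ≤ c → ∀ x ∈ P, c • x ∈ P)
    (hP0 : (0 : EuclideanSpace ℝ (Fin p)) ∈ P)
    (hS1ne : S1.Nonempty) (hS2ne : S2.Nonempty)
    (l : ℝ) (hl : 0 ≤ l)
    (hsub : S1 ⊆ S2 + Metric.closedBall (0 : EuclideanSpace ℝ (Fin p)) l)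
    (hS2bdd : recessionCone S2 ∩ (-P) = {0}) :
    recessionCone (closure S1) ∩ (-P) = {0} :=
  stmt8_general P S1 S2 hP0 hS1ne l hsub hS2bdd
end

section
/- Let F be a set-valued map from a normed space X to R^p that is Lipschitz around x with constant l, i.e., F(x1) ⊂ F(x2) + l‖x1 - x2‖B̄ for x1, x2 near x, and let y ∈ F(x). Then for every v ∈ X the contingent derivative DF((x,y); v) is nonempty, and the map v ↦ DF((x,y); v) is Lipschitz with constant l: DF((x,y); v1) ⊂ DF((x,y); v2) + l‖v1 - v2‖B̄. -/
/-!
Let `w ∈ DF((x,y); v₁)` be realized by `hₖ → 0⁺`, `vₖ → v₁`, `wₖ → w`. Moving the directions to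
`uₖ = vₖ - v₁ + v₂ → v₂`, the Lipschitz inclusion between `F (x + hₖ vₖ)` and `F (x + hₖ uₖ)`
yields corrections `cₖ` with `‖cₖ‖ ≤ l ‖v₁ - v₂‖` and `y + hₖ (wₖ - cₖ) ∈ F (x + hₖ uₖ)`.
The ball is compact in finite dimension, so along a subsequence `cₖ → c`, and then
`w - c ∈ DF((x,y); v₂)`.
Nonemptiness follows by comparing with `0 ∈ DF((x,y); 0)`.
-/

open Filter Topology Pointwise

open Metric

section

variable {X E : Type*} [NormedAddCommGroup X] [NormedSpace ℝ X]
  [NormedAddCommGroup E] [NormedSpace ℝ E]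

theorem zero_mem_contDeriv_zero {F : X → Set E} {x : X} {y : E} (hy : y ∈ F x) :
    (0 : E) ∈ contDeriv F x y 0 :=
  ⟨fun k => 1 / (k + 1), fun _ => 0, fun _ => 0, fun k => by positivity,
    tendsto_one_div_add_atTop_nhds_zero_nat, tendsto_const_nhds, tendsto_const_nhds,
    fun _ => by simpa using hy⟩

theorem tendsto_add_smul_of_tendsto_zero {h : ℕ → ℝ} {vk : ℕ → X} {v : X} (x : X)
    (h0 : Tendsto h atTop (𝓝 0)) (hv : Tendsto vk atTop (𝓝 v)) :
    Tendsto (fun k => x + h k • vk k) atTop (𝓝 x) := by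
  simpa using tendsto_const_nhds.add (h0.smul hv)

theorem exists_smul_sub_mem_of_subset_add_closedBall {F : X → Set E} {x u u' : X} {y w : E}
    {l t : ℝ} (ht : 0 < t)
    (hF : F (x + t • u) ⊆ F (x + t • u') + closedBall 0 (l * ‖x + t • u - (x + t • u')‖))
    (hw : y + t • w ∈ F (x + t • u)) :
    ∃ c ∈ closedBall (0 : E) (l * ‖u - u'‖), y + t • (w - c) ∈ F (x + t • u') := by
  obtain ⟨z, hz, b, hb, hzb : z + b = y + t • w⟩ := hF hw
  have hdist : ‖x + t • u - (x + t • u')‖ = t * ‖u - u'‖ := by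
    rw [add_sub_add_left_eq_sub, ← smul_sub, norm_smul, Real.norm_of_nonneg ht.le]
  rw [hdist, mem_closedBall_zero_iff] at hb
  refine ⟨t⁻¹ • b, ?_, ?_⟩
  · rw [mem_closedBall_zero_iff, norm_smul, Real.norm_of_nonneg (inv_nonneg.2 ht.le),
      inv_mul_le_iff₀ ht]
    linarith
  · rwa [smul_sub, smul_inv_smul₀ ht.ne', ← add_sub_assoc, ← hzb, add_sub_cancel_right]

theorem exists_sub_mem_contDeriv_of_eventually {F : X → Set E} {x : X} {y : E}
    {h : ℕ → ℝ} {vk : ℕ → X} {wk : ℕ → E} {v : X} {w : E} {K : Set E} (hK : IsCompact K)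
    (hpos : ∀ k, 0 < h k) (h0 : Tendsto h atTop (𝓝 0)) (hv : Tendsto vk atTop (𝓝 v))
    (hw : Tendsto wk atTop (𝓝 w))
    (hmem : ∀ᶠ k in atTop, ∃ c ∈ K, y + h k • (wk k - c) ∈ F (x + h k • vk k)) :
    ∃ c ∈ K, w - c ∈ contDeriv F x y v := by
  obtain ⟨N, hN⟩ := eventually_atTop.1 hmem
  choose! c hcK hc using hN
  obtain ⟨a, haK, φ, hφ, hca⟩ :=
    hK.tendsto_subseq (x := fun k => c (k + N)) fun k => hcK _ (Nat.le_add_left N k)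
  have hψ : Tendsto (fun k => φ k + N) atTop atTop :=
    (tendsto_add_atTop_nat N).comp hφ.tendsto_atTop
  exact ⟨a, haK, fun k => h (φ k + N), fun k => vk (φ k + N),
    fun k => wk (φ k + N) - c (φ k + N), fun k => hpos _, h0.comp hψ, hv.comp hψ,
    (hw.comp hψ).sub hca, fun k => hc _ (Nat.le_add_left N _)⟩

theorem LipschitzAround.exists_mem_contDeriv_norm_sub_le [ProperSpace E] {F : X → Set E} {x : X}
    {l : ℝ} (hLip : LipschitzAround F x l) {y w : E} {v₁ : X} (hw : w ∈ contDeriv F x y v₁)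
    (v₂ : X) : ∃ w' ∈ contDeriv F x y v₂, ‖w - w'‖ ≤ l * ‖v₁ - v₂‖ := by
  obtain ⟨O, hO, hLO⟩ := hLip
  obtain ⟨h, vk, wk, hpos, h0, hv, hwk, hmem⟩ := hw
  have hu : Tendsto (fun k => vk k - v₁ + v₂) atTop (𝓝 v₂) := by
    simpa using (hv.sub_const v₁).add_const v₂
  have hcorr : ∀ᶠ k in atTop, ∃ c ∈ closedBall (0 : E) (l * ‖v₁ - v₂‖),
      y + h k • (wk k - c) ∈ F (x + h k • (vk k - v₁ + v₂)) := by
    filter_upwards [tendsto_add_smul_of_tendsto_zero x h0 hv hO,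
      tendsto_add_smul_of_tendsto_zero x h0 hu hO] with k hk₁ hk₂
    have hdir : vk k - (vk k - v₁ + v₂) = v₁ - v₂ := by abel
    simpa only [hdir] using
      exists_smul_sub_mem_of_subset_add_closedBall (hpos k) (hLO _ hk₁ _ hk₂) (hmem k)
  obtain ⟨c, hc, hwc⟩ :=
    exists_sub_mem_contDeriv_of_eventually (isCompact_closedBall _ _) hpos h0 hu hwk hcorr
  exact ⟨w - c, hwc, by simpa using mem_closedBall_zero_iff.1 hc⟩

theorem LipschitzAround.contDeriv_subset_add_closedBall [ProperSpace E] {F : X → Set E} {x : X}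
    {l : ℝ} (hLip : LipschitzAround F x l) (y : E) (v₁ v₂ : X) :
    contDeriv F x y v₁ ⊆ contDeriv F x y v₂ + closedBall (0 : E) (l * ‖v₁ - v₂‖) := by
  intro w hw
  obtain ⟨w', hw', hle⟩ := hLip.exists_mem_contDeriv_norm_sub_le hw v₂
  exact ⟨w', hw', w - w', mem_closedBall_zero_iff.2 hle, add_sub_cancel w' w⟩

end

theorem stmt10_general {p : ℕ} {X : Type*} [NormedAddCommGroup X] [NormedSpace ℝ X]
    (F : X → Set (EuclideanSpace ℝ (Fin p))) (x : X) (l : ℝ)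
    (hLip : LipschitzAround F x l)
    (y : EuclideanSpace ℝ (Fin p)) (hy : y ∈ F x) :
    (∀ v : X, (contDeriv F x y v).Nonempty) ∧
    (∀ v1 v2 : X, contDeriv F x y v1 ⊆
      contDeriv F x y v2 + Metric.closedBall (0 : EuclideanSpace ℝ (Fin p)) (l * ‖v1 - v2‖)) := by
  refine ⟨fun v => ?_, hLip.contDeriv_subset_add_closedBall y⟩
  obtain ⟨w, hw, -⟩ := hLip.contDeriv_subset_add_closedBall y 0 v (zero_mem_contDeriv_zero hy)
  exact ⟨w, hw⟩

theorem stmt10 {p : ℕ} {X : Type*} [NormedAddCommGroup X] [NormedSpace ℝ X]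
    (F : X → Set (EuclideanSpace ℝ (Fin p))) (x : X) (l : ℝ) (hl : 0 ≤ l)
    (hLip : LipschitzAround F x l)
    (y : EuclideanSpace ℝ (Fin p)) (hy : y ∈ F x) :
    (∀ v : X, (contDeriv F x y v).Nonempty) ∧
    (∀ v1 v2 : X, contDeriv F x y v1 ⊆
      contDeriv F x y v2 + Metric.closedBall (0 : EuclideanSpace ℝ (Fin p)) (l * ‖v1 - v2‖)) :=
  stmt10_general F x l hLip y hy
end

section
/- Let P ⊂ int(C) ∪ {0}, where P is pointed closed convex and C is a closed convex cone with nonempty interior. Let K be a nonempty compact subset of R^p satisfying E(K,P) = E(K,C). Then every minimal element of K with respect to P is properly minimal: E(K,P) = PE(K,P), i.e., for every y ∈ E(K,P) one has T_{K+P}(y) ∩ (-P) = {0}. -/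
open Filter Topology Pointwise

theorem stmt14 {p : ℕ} (P C K : Set (EuclideanSpace ℝ (Fin p)))
    (hPconv : Convex ℝ P) (hPcone : ∀ (c : ℝ), 0 ≤ c → ∀ x ∈ P, c • x ∈ P)
    (hPclosed : IsClosed P) (hP0 : (0 : EuclideanSpace ℝ (Fin p)) ∈ P)
    (hPpointed : P ∩ (-P) = {0})
    (hCconv : Convex ℝ C) (hCcone : ∀ (c : ℝ), 0 ≤ c → ∀ x ∈ C, c • x ∈ C)
    (hCclosed : IsClosed C) (hC0 : (0 : EuclideanSpace ℝ (Fin p)) ∈ C)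
    (hCint : (interior C).Nonempty)
    (hPC : P ⊆ interior C ∪ {0})
    (hKne : K.Nonempty) (hK : IsCompact K)
    (hEK : minimalSet K P = minimalSet K C) :
    ∀ y ∈ minimalSet K P, contingentCone (K + P) y ∩ (-P) = {0} := by

  intro y hy
  have hyC : y ∈ minimalSet K C := hEK ▸ hy
  -- C + C ⊆ C
  have hCadd : ∀ a ∈ C, ∀ b ∈ C, a + b ∈ C := by
    intro a ha b hb
    have hmid : (1/2 : ℝ) • a + (1/2 : ℝ) • b ∈ C :=
      hCconv ha hb (by norm_num) (by norm_num) (by norm_num)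
    have := hCcone 2 (by norm_num) _ hmid
    simpa [smul_add, smul_smul] using this
  -- c ∈ C, d ∈ interior C ⇒ c + d ∈ interior C
  have hCaddint : ∀ a ∈ C, ∀ b ∈ interior C, a + b ∈ interior C := by
    intro a ha b hb
    have hsub : a +ᵥ interior C ⊆ C := by
      rintro x ⟨d, hd, rfl⟩
      exact hCadd a ha d (interior_subset hd)
    have hopen : IsOpen (a +ᵥ interior C) :=
      (Homeomorph.addLeft a).isOpenMap _ isOpen_interior
    exact interior_maximal hsub hopen ⟨b, hb, rfl⟩
  -- positive scaling preserves interior C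
  have hCsmulint : ∀ (c : ℝ), 0 < c → ∀ x ∈ interior C, c • x ∈ interior C := by
    intro c hc x hx
    have hsub : c • interior C ⊆ C := by
      rintro z ⟨d, hd, rfl⟩
      exact hCcone c hc.le d (interior_subset hd)
    have hopen : IsOpen (c • interior C) := isOpen_interior.smul₀ hc.ne'
    exact interior_maximal hsub hopen ⟨x, hx, rfl⟩
  have hPsubC : P ⊆ C := by
    intro q hq
    rcases hPC hq with h | h
    · exact interior_subset h
    · simpa [Set.mem_singleton_iff.1 h] using hC0
  apply Set.eq_singleton_iff_unique_mem.2
  constructor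
  · refine ⟨⟨fun k => 1 / (k + 1), fun _ => 0, fun k => by positivity,
      tendsto_one_div_add_atTop_nhds_zero_nat, tendsto_const_nhds, fun k => ?_⟩, ?_⟩
    · simpa using Set.add_mem_add hy.1 hP0
    · simpa using Set.neg_mem_neg.2 hP0
  · rintro v ⟨⟨h, vk, hpos, hh0, hvk, hmem⟩, hvP⟩
    by_contra hvne
    have hvP' : -v ∈ P := Set.mem_neg.1 hvP
    have hvC : -v ∈ interior C := by
      rcases hPC hvP' with h1 | h1
      · exact h1
      · exact absurd (neg_eq_zero.1 (Set.mem_singleton_iff.1 h1)) hvne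
    have hev : ∀ᶠ k in atTop, -vk k ∈ interior C :=
      hvk.neg.eventually_mem (isOpen_interior.mem_nhds hvC)
    obtain ⟨k, hk'⟩ := hev.exists
    obtain ⟨x, hx, q, hq, hxq⟩ := Set.mem_add.1 (hmem k)
    have hyx : y - x = q + h k • (-vk k) := by
      rw [smul_neg]
      linear_combination (norm := module) -hxq
    have hyxint : y - x ∈ interior C := by
      rw [hyx]
      exact hCaddint q (hPsubC hq) _ (hCsmulint (h k) (hpos k) _ hk')
    have hxy : x = y := by
      have : x ∈ ((fun d => y - d) '' C) ∩ K :=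
        ⟨⟨y - x, interior_subset hyxint, by simp⟩, hx⟩
      rw [hyC.2] at this
      exact this
    have h0int : (0 : EuclideanSpace ℝ (Fin p)) ∈ interior C := by
      rw [hxy] at hyxint; simpa using hyxint
    -- C = univ
    have hCuniv : C = Set.univ := by
      obtain ⟨ε, hε, hball⟩ := Metric.mem_nhds_iff.1 (mem_interior_iff_mem_nhds.1 h0int)
      ext z
      simp only [Set.mem_univ, iff_true]
      rcases eq_or_ne z 0 with rfl | hz
      · exact hC0
      · have hznorm : 0 < ‖z‖ := norm_pos_iff.2 hz
        set c := ε / (2 * ‖z‖) with hc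
        have hc0 : 0 < c := by positivity
        have hmemb : c • z ∈ C := by
          apply hball
          simp only [Metric.mem_ball, dist_zero_right, norm_smul, Real.norm_eq_abs,
            abs_of_pos hc0]
          rw [hc, div_mul_eq_mul_div, mul_comm]
          rw [div_lt_iff₀ (by positivity)]
          nlinarith
        have := hCcone c⁻¹ (by positivity) _ hmemb
        rwa [smul_smul, inv_mul_cancel₀ hc0.ne', one_smul] at this
    -- K = {y}
    have hKy : K = {y} := by
      have himg : (fun d => y - d) '' C = Set.univ := by
        rw [hCuniv]
        ext z
        simp only [Set.image_univ, Set.mem_range, Set.mem_univ, iff_true]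
        exact ⟨y - z, by abel⟩
      have := hyC.2
      rw [himg, Set.univ_inter] at this
      exact this
    -- now vk k ∈ P for all k, so v ∈ P, contradiction with pointedness
    have hvkP : ∀ k, vk k ∈ P := by
      intro k
      obtain ⟨x, hx, q, hq, hxq⟩ := Set.mem_add.1 (hmem k)
      rw [hKy, Set.mem_singleton_iff] at hx
      subst hx
      have h2 : q = h k • vk k := add_left_cancel hxq
      rw [h2] at hq
      have := hPcone (h k)⁻¹ (inv_nonneg.2 (hpos k).le) _ hq
      rwa [smul_smul, inv_mul_cancel₀ (hpos k).ne', one_smul] at this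
    have hvPmem : v ∈ P := hPclosed.mem_of_tendsto hvk (Filter.Eventually.of_forall hvkP)
    have : v ∈ P ∩ (-P) := ⟨hvPmem, hvP⟩
    rw [hPpointed] at this
    exact hvne this
end

section
/- Let P ⊂ int(C) ∪ {0}, with P pointed closed convex cone and C a closed pointed convex cone with nonempty interior. There exists a constant M = M(C,P) ≥ 0 such that for all nonempty compact sets K1, K2 ⊂ R^p satisfying E(K_i,P) = E(K_i,C) (i = 1,2), the Hausdorff distance between minimal element sets satisfies H(E(K1,P), E(K2,P)) ≤ M · H(K1,K2). -/
open Filter Topology Pointwise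

/-! Choose `δ > 0` such that every ball `B(c, δ‖c‖)` with `c ∈ P` lies in `C \ {0}`; it exists
because `P ∩ {‖x‖ = 1}` is a compact subset of `int C`. Let `y ∈ E(K₁,P) = E(K₁,C)` and
`l = H(K₁,K₂)`. Pick `y₂ ∈ K₂` within `l` of `y`, then `e ∈ E(K₂,P)` with `c = y₂ - e ∈ P`
(external stability), then `y₁ ∈ K₁` within `l` of `e`. Now `y - y₁` lies within `2l` of `c`, so
`‖c‖ > 2l/δ` would put `y - y₁` in `C \ {0}`, against the minimality of `y`. Hence
`‖y - e‖ ≤ (1 + 2/δ) l`, and by symmetry `H(E(K₁,P), E(K₂,P)) ≤ (1 + 2/δ) l`. -/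

open Set Metric

theorem eq_of_sub_mem_of_sub_mem {G : Type*} [AddGroup G] {P : Set G} (hpointed : P ∩ -P = {0})
    {a b : G} (hab : a - b ∈ P) (hba : b - a ∈ P) : a = b := by
  have h : a - b ∈ P ∩ -P := ⟨hab, by simpa using hba⟩
  rw [hpointed, mem_singleton_iff, sub_eq_zero] at h
  exact h

theorem exists_dist_le_hausdorffDist {α : Type*} [PseudoMetricSpace α] {s t : Set α}
    (hs : Bornology.IsBounded s) (ht : IsCompact t) (ht_ne : t.Nonempty) {x : α} (hx : x ∈ s) :
    ∃ y ∈ t, dist x y ≤ hausdorffDist s t := by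
  obtain ⟨y, hy, hxy⟩ := ht.exists_infDist_eq_dist ht_ne x
  refine ⟨y, hy, hxy ▸ infDist_le_hausdorffDist_of_mem hx ?_⟩
  exact hausdorffEDist_ne_top_of_nonempty_of_bounded ⟨x, hx⟩ ht_ne hs ht.isBounded

section MinimalSet

variable {E : Type*} [NormedAddCommGroup E] [NormedSpace ℝ E]

theorem add_mem_of_convex_of_smul_mem {P : Set E} (hconv : Convex ℝ P)
    (hcone : ∀ c : ℝ, 0 ≤ c → ∀ x ∈ P, c • x ∈ P) {a b : E} (ha : a ∈ P) (hb : b ∈ P) :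
    a + b ∈ P := by
  have hmid := hconv ha hb (by norm_num : (0 : ℝ) ≤ 1 / 2) (by norm_num : (0 : ℝ) ≤ 1 / 2)
    (by norm_num)
  convert hcone 2 (by norm_num) _ hmid using 1
  module

theorem eq_of_mem_minimalSet {S P : Set E} {x y : E} (hy : y ∈ minimalSet S P) (hx : x ∈ S)
    (hyx : y - x ∈ P) : x = y := by
  have hx' : x ∈ ((fun d => y - d) '' P) ∩ S := ⟨⟨y - x, hyx, sub_sub_cancel y x⟩, hx⟩
  rwa [hy.2] at hx'

theorem mem_minimalSet_of_forall {S P : Set E} (h0 : (0 : E) ∈ P) {y : E} (hy : y ∈ S)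
    (h : ∀ x ∈ S, y - x ∈ P → x = y) : y ∈ minimalSet S P := by
  refine ⟨hy, eq_singleton_iff_unique_mem.2 ⟨⟨⟨0, h0, sub_zero y⟩, hy⟩, ?_⟩⟩
  rintro x ⟨⟨d, hd, rfl⟩, hx⟩
  exact h _ hx (by simpa using hd)

/-- External stability, `K ⊆ E(K,P) + P`. -/
theorem exists_mem_minimalSet_sub_mem {P K : Set E} (hconv : Convex ℝ P)
    (hcone : ∀ c : ℝ, 0 ≤ c → ∀ x ∈ P, c • x ∈ P) (hclosed : IsClosed P)
    (hpointed : P ∩ -P = {0}) (hK : IsCompact K) {y : E} (hy : y ∈ K) :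
    ∃ e ∈ minimalSet K P, y - e ∈ P := by
  have h0 : (0 : E) ∈ P := (hpointed.symm.subset rfl).1
  -- `sec z` is the part of `K` below `z`; a minimal section is the section of a minimal point.
  set sec : E → Set E := fun z => K ∩ (z - ·) ⁻¹' P
  have hsec_self : ∀ z ∈ K, z ∈ sec z := fun z hz => ⟨hz, by simpa using h0⟩
  have hsec_mono : ∀ {z w : E}, w - z ∈ P → sec z ⊆ sec w := fun hwz x hx =>
    ⟨hx.1, by simpa using add_mem_of_convex_of_smul_mem hconv hcone hwz hx.2⟩
  have hsec_compact : ∀ z, IsCompact (sec z) := fun z =>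
    hK.inter_right (hclosed.preimage (by fun_prop))
  have hchain : ∀ c ⊆ sec '' sec y, IsChain (· ⊆ ·) c → c.Nonempty →
      ∃ lb ∈ sec '' sec y, ∀ s ∈ c, lb ⊆ s := by
    rintro c hc hc_chain ⟨_, hB⟩
    have : Nonempty c := ⟨⟨_, hB⟩⟩
    obtain ⟨z, hz, rfl⟩ := hc hB
    obtain ⟨w, hw⟩ := IsCompact.nonempty_sInter_of_directed_nonempty_isCompact_isClosed
      (fun a ha b hb => (hc_chain.total ha hb).elim (fun h => ⟨a, ha, subset_rfl, h⟩)
        (fun h => ⟨b, hb, h, subset_rfl⟩))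
      (fun s hs => by obtain ⟨z, hz, rfl⟩ := hc hs; exact ⟨z, hsec_self z hz.1⟩)
      (fun s hs => by obtain ⟨z, -, rfl⟩ := hc hs; exact hsec_compact z)
      (fun s hs => by obtain ⟨z, -, rfl⟩ := hc hs; exact (hsec_compact z).isClosed)
    refine ⟨sec w, ⟨w, hsec_mono hz.2 (hw _ hB), rfl⟩, fun s hs => ?_⟩
    obtain ⟨z', -, rfl⟩ := hc hs
    exact hsec_mono (hw _ hs).2
  obtain ⟨_, -, hmin⟩ := zorn_superset_nonempty _ hchain (sec y) ⟨y, hsec_self y hy, rfl⟩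
  obtain ⟨e, he, rfl⟩ := hmin.prop
  refine ⟨e, mem_minimalSet_of_forall h0 he.1 fun w hw hew => ?_, he.2⟩
  have hsec_eq : sec w = sec e :=
    hmin.eq_of_subset ⟨w, hsec_mono he.2 ⟨hw, hew⟩, rfl⟩ (hsec_mono hew)
  exact eq_of_sub_mem_of_sub_mem hpointed (hsec_eq ▸ hsec_self e he.1).2 hew

theorem exists_pos_ball_mul_norm_subset_diff_zero [ProperSpace E] {P C : Set E}
    (hPcone : ∀ c : ℝ, 0 ≤ c → ∀ x ∈ P, c • x ∈ P) (hPclosed : IsClosed P)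
    (hCcone : ∀ c : ℝ, 0 ≤ c → ∀ x ∈ C, c • x ∈ C) (hPC : P ⊆ interior C ∪ {0}) :
    ∃ δ > 0, ∀ c ∈ P, ball c (δ * ‖c‖) ⊆ C \ {0} := by
  have hS : IsCompact (P ∩ sphere 0 1) := (isCompact_sphere 0 1).inter_left hPclosed
  have hSC : P ∩ sphere 0 1 ⊆ interior C := fun s ⟨hsP, hs1⟩ =>
    (hPC hsP).resolve_right fun h => by simp [mem_singleton_iff.1 h] at hs1
  obtain ⟨δ, hδ, hδC⟩ := hS.exists_cthickening_subset_open isOpen_interior hSC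
  refine ⟨min δ 1, by positivity, fun c hc x hx => ?_⟩
  rw [mem_ball] at hx
  have hc_pos : 0 < ‖c‖ := pos_of_mul_pos_right (dist_nonneg.trans_lt hx) (by positivity)
  have hx0 : x ≠ 0 := by
    rintro rfl
    rw [dist_zero_left] at hx
    nlinarith [min_le_right δ 1]
  refine ⟨?_, hx0⟩
  -- Rescale `x` by `‖c‖⁻¹`: it lands within `δ` of the unit vector `‖c‖⁻¹ • c ∈ P`.
  have hunit : ‖c‖⁻¹ • c ∈ P ∩ sphere 0 1 :=
    ⟨hPcone _ (by positivity) c hc, by simp [norm_smul, hc_pos.ne']⟩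
  have hnear : ‖c‖⁻¹ • x ∈ cthickening δ (P ∩ sphere 0 1) := by
    refine mem_cthickening_of_dist_le _ _ _ _ hunit ?_
    rw [dist_smul₀, norm_inv, norm_norm, inv_mul_le_iff₀ hc_pos, mul_comm]
    exact hx.le.trans (mul_le_mul_of_nonneg_right (min_le_left _ _) hc_pos.le)
  simpa [hc_pos.ne'] using hCcone ‖c‖ hc_pos.le _ (interior_subset (hδC hnear))

theorem exists_mem_minimalSet_dist_le {P C : Set E} (hPconv : Convex ℝ P)
    (hPcone : ∀ c : ℝ, 0 ≤ c → ∀ x ∈ P, c • x ∈ P) (hPclosed : IsClosed P)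
    (hPpointed : P ∩ -P = {0}) {δ : ℝ} (hδ : 0 < δ)
    (hball : ∀ c ∈ P, ball c (δ * ‖c‖) ⊆ C \ {0}) {K₁ K₂ : Set E} (hK₁ : IsCompact K₁)
    (hK₂ : IsCompact K₂) (hK₂_ne : K₂.Nonempty) {y : E} (hy : y ∈ minimalSet K₁ C) :
    ∃ e ∈ minimalSet K₂ P, dist y e ≤ (1 + 2 / δ) * hausdorffDist K₁ K₂ := by
  set l := hausdorffDist K₁ K₂
  obtain ⟨y₂, hy₂, hyy₂⟩ := exists_dist_le_hausdorffDist hK₁.isBounded hK₂ hK₂_ne hy.1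
  obtain ⟨e, he, hce⟩ :=
    exists_mem_minimalSet_sub_mem hPconv hPcone hPclosed hPpointed hK₂ hy₂
  obtain ⟨y₁, hy₁, hey₁⟩ := exists_dist_le_hausdorffDist hK₂.isBounded hK₁ ⟨y, hy.1⟩ he.1
  rw [hausdorffDist_comm] at hey₁
  have hc : ‖y₂ - e‖ ≤ 2 / δ * l := by
    by_contra! hlt
    have hnear : y - y₁ ∈ ball (y₂ - e) (δ * ‖y₂ - e‖) := by
      rw [mem_ball, dist_eq_norm]
      calc ‖y - y₁ - (y₂ - e)‖ = ‖(y - y₂) + (e - y₁)‖ := by congr 1; abel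
        _ ≤ l + l := (norm_add_le _ _).trans (by rw [← dist_eq_norm, ← dist_eq_norm]; gcongr)
        _ < δ * ‖y₂ - e‖ := by rw [div_mul_eq_mul_div, div_lt_iff₀ hδ] at hlt; linarith
    obtain ⟨hyy₁C, hyy₁_ne⟩ := hball _ hce hnear
    exact hyy₁_ne (sub_eq_zero.2 (eq_of_mem_minimalSet hy hy₁ hyy₁C).symm)
  refine ⟨e, he, ?_⟩
  calc dist y e ≤ dist y y₂ + ‖y₂ - e‖ := dist_eq_norm y₂ e ▸ dist_triangle y y₂ e
    _ ≤ l + 2 / δ * l := add_le_add hyy₂ hc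
    _ = (1 + 2 / δ) * l := by ring

end MinimalSet

theorem stmt15_general {p : ℕ} (P C : Set (EuclideanSpace ℝ (Fin p)))
    (hPconv : Convex ℝ P) (hPcone : ∀ (c : ℝ), 0 ≤ c → ∀ x ∈ P, c • x ∈ P)
    (hPclosed : IsClosed P)
    (hPpointed : P ∩ (-P) = {0})
    (hCcone : ∀ (c : ℝ), 0 ≤ c → ∀ x ∈ C, c • x ∈ C)
    (hPC : P ⊆ interior C ∪ {0}) :
    ∃ M : ℝ, 0 ≤ M ∧ ∀ K1 K2 : Set (EuclideanSpace ℝ (Fin p)),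
      K1.Nonempty → IsCompact K1 → K2.Nonempty → IsCompact K2 →
      minimalSet K1 P = minimalSet K1 C → minimalSet K2 P = minimalSet K2 C →
      Metric.hausdorffDist (minimalSet K1 P) (minimalSet K2 P) ≤
        M * Metric.hausdorffDist K1 K2 := by
  obtain ⟨δ, hδ, hball⟩ := exists_pos_ball_mul_norm_subset_diff_zero hPcone hPclosed hCcone hPC
  refine ⟨1 + 2 / δ, by positivity, fun K1 K2 hK1_ne hK1 hK2_ne hK2 hE1 hE2 => ?_⟩
  apply hausdorffDist_le_of_mem_dist (mul_nonneg (by positivity) hausdorffDist_nonneg)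
  · intro y hy
    exact exists_mem_minimalSet_dist_le hPconv hPcone hPclosed hPpointed hδ hball hK1 hK2 hK2_ne
      (hE1 ▸ hy)
  · intro y hy
    rw [hausdorffDist_comm]
    exact exists_mem_minimalSet_dist_le hPconv hPcone hPclosed hPpointed hδ hball hK2 hK1 hK1_ne
      (hE2 ▸ hy)

theorem stmt15 {p : ℕ} (P C : Set (EuclideanSpace ℝ (Fin p)))
    (hPconv : Convex ℝ P) (hPcone : ∀ (c : ℝ), 0 ≤ c → ∀ x ∈ P, c • x ∈ P)
    (hPclosed : IsClosed P) (hP0 : (0 : EuclideanSpace ℝ (Fin p)) ∈ P)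
    (hPpointed : P ∩ (-P) = {0}) (hPint : (interior P).Nonempty)
    (hCconv : Convex ℝ C) (hCcone : ∀ (c : ℝ), 0 ≤ c → ∀ x ∈ C, c • x ∈ C)
    (hCclosed : IsClosed C) (hC0 : (0 : EuclideanSpace ℝ (Fin p)) ∈ C)
    (hCpointed : C ∩ (-C) = {0}) (hCint : (interior C).Nonempty)
    (hPC : P ⊆ interior C ∪ {0}) :
    ∃ M : ℝ, 0 ≤ M ∧ ∀ K1 K2 : Set (EuclideanSpace ℝ (Fin p)),
      K1.Nonempty → IsCompact K1 → K2.Nonempty → IsCompact K2 →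
      minimalSet K1 P = minimalSet K1 C → minimalSet K2 P = minimalSet K2 C →
      Metric.hausdorffDist (minimalSet K1 P) (minimalSet K2 P) ≤
        M * Metric.hausdorffDist K1 K2 :=
  stmt15_general P C hPconv hPcone hPclosed hPpointed hCcone hPC
end
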